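/- Let S = (β, γ) be a standard symbol and let ι be the involution of Z(S) whose nontrivial orbits are the pairs of S (so ι fixes all other elements of Z(S)). Then C(S) equals the set of all symbols Σ = (β̃, γ̃) ∈ Sy(n,k,r) such that β̃ ∩ γ̃ = β ∩ γ, Z(Σ) = Z(S), and for each nontrivial orbit {z, z′} of ι one of z, z′ belongs to β̃ and the other to γ̃. -/

import Mathlib

/-!
Standardness forces the matching `ψ` to be defined on all of `γ`: if `j ∈ γ` were never
matched, then every `b ∈ β` with `b ≤ j` would already be the image of some `j' < j` of `γ`
(otherwise `j` would have been matched with `b` at level `j - b`), so `β` would have at most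
as many entries `≤ j` as `γ` has entries `< j`, against `β_i ≤ γ_i = j` for
`i = #{x ∈ γ | x < j}`. Hence `ψ` is an injection of `γ \ β` into `β \ γ`, and the pairs
are the `(j, ψ j)` with `j ∈ γ \ β`. Exchanging the pairs indexed by `A ⊆ γ \ β` keeps the
intersection, the union and the sizes of the rows. Conversely, a symbol with these
invariants that splits every pair is the exchange along `A = {j ∈ γ \ β | j ∈ β̃}`: its
bottom row contains the exchanged bottom row and has the same size, and a row is determined
by its intersection and union with the other one.
-/

namespace LM2003

open scoped BigOperators

/-- `(β, γ)` is a symbol in `Sy(n,k,r)`: two finite sets of integers contained in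
`{1, …, n+1}`, of cardinalities `k+r` and `k` (rows are identified with the subsets
they enumerate; strict increase is automatic). -/
def IsSymbol (n k r : ℕ) (β γ : Finset ℤ) : Prop :=
  β ⊆ Finset.Icc 1 ((n : ℤ) + 1) ∧ γ ⊆ Finset.Icc 1 ((n : ℤ) + 1) ∧
    β.card = k + r ∧ γ.card = k

/-- `(β,γ)` is standard: for each `i < |γ|`, the `i`-th smallest element of `β`
is `≤` the `i`-th smallest element of `γ`. -/
def IsStandard (β γ : Finset ℤ) : Prop :=
  ∀ i : ℕ, i < γ.card → (β.sort (· ≤ ·))[i]! ≤ (γ.sort (· ≤ ·))[i]!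

/-- Accumulated data after level `l` of the recursive definition of `ψ`:
the first component is `γ⁰ ∪ ⋯ ∪ γ^l` and the second is `ψ(γ⁰ ∪ ⋯ ∪ γ^l)`. -/
def psiAcc (β γ : Finset ℤ) : ℕ → Finset ℤ × Finset ℤ
  | 0 => (γ ∩ β, γ ∩ β)
  | l + 1 =>
    let p := psiAcc β γ l
    let g := (γ \ p.1).filter fun j => j - ((l : ℤ) + 1) ∈ β \ p.2
    (p.1 ∪ g, p.2 ∪ g.image fun j => j - ((l : ℤ) + 1))

/-- The level sets `γ^l` in the recursive definition of `ψ`. -/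
def gammaL (β γ : Finset ℤ) : ℕ → Finset ℤ
  | 0 => γ ∩ β
  | l + 1 =>
    (γ \ (psiAcc β γ l).1).filter fun j => j - ((l : ℤ) + 1) ∈ β \ (psiAcc β γ l).2

open Classical in
/-- The map `ψ` : for `j ∈ γ^l` it is `j ↦ j - l` (via the least such `l`),
and the identity elsewhere. -/
noncomputable def psiS (β γ : Finset ℤ) (j : ℤ) : ℤ :=
  if h : ∃ l, j ∈ gammaL β γ l then j - (Nat.find h : ℤ) else j

/-- The pairs of a (standard) symbol: the pairs `(j, ψ(j))` with `j ∈ γ` and `ψ(j) ≠ j`. -/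
noncomputable def pairsS (β γ : Finset ℤ) : Finset (ℤ × ℤ) :=
  (γ.filter fun j => psiS β γ j ≠ j).image fun j => (j, psiS β γ j)

/-- Exchanging, for every pair in `T`, the two members between the two rows of `(β,γ)`
(reordering of rows is automatic for sets). Pairs are written `(j, ψ j)` with `j` in the
bottom row `γ` and `ψ j` in the top row `β`. -/
def swapSymbol (β γ : Finset ℤ) (T : Finset (ℤ × ℤ)) : Finset ℤ × Finset ℤ :=
  ((β \ T.image Prod.snd) ∪ T.image Prod.fst,
   (γ \ T.image Prod.fst) ∪ T.image Prod.snd)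

/-- The class `C(S)` of a standard symbol: all symbols obtained by permuting a subset
of its pairs. -/
noncomputable def CSet (β γ : Finset ℤ) : Finset (Finset ℤ × Finset ℤ) :=
  (pairsS β γ).powerset.image (swapSymbol β γ)

/-- The Fock space `F(Λ)`: free `ℚ(v)`-module on the set of all symbols. -/
abbrev FF : Type := (Finset ℤ × Finset ℤ) →₀ RatFunc ℚ

/-- Standard basis vector `u_S`. -/
noncomputable def uS (S : Finset ℤ × Finset ℤ) : FF := Finsupp.single S 1

/-- The variable `v` of `K = ℚ(v)`. -/
noncomputable def vv : RatFunc ℚ := RatFunc.X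

/-- Action of the Chevalley generator `f_j` on the standard basis vector `u_S`. -/
noncomputable def fAct (j : ℤ) (S : Finset ℤ × Finset ℤ) : FF :=
  (if j ∈ S.2 ∧ j + 1 ∉ S.2 then uS (S.1, insert (j + 1) (S.2.erase j)) else 0) +
  (if j ∈ S.1 ∧ j + 1 ∉ S.1 then
      vv ^ ((if j ∈ S.2 then (1 : ℤ) else 0) - (if j + 1 ∈ S.2 then (1 : ℤ) else 0)) •
        uS (insert (j + 1) (S.1.erase j), S.2)
    else 0)

/-- The Chevalley generator `f_j` as a linear operator on `F`. -/
noncomputable def fLin (j : ℤ) : FF →ₗ[RatFunc ℚ] FF :=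
  Finsupp.lsum (RatFunc ℚ) fun S => LinearMap.toSpanSingleton (RatFunc ℚ) FF (fAct j S)

/-- Divided powers: `f_j^{(1)} = f_j`, `f_j^{(2)} = f_j² / (v + v⁻¹)`. -/
noncomputable def fDiv (j : ℤ) (m : ℕ) : FF →ₗ[RatFunc ℚ] FF :=
  if m = 2 then (vv + vv⁻¹)⁻¹ • (fLin j ∘ₗ fLin j) else fLin j

/-- `b_S = Σ_{Σ ∈ C(S)} v^{n(Σ)} u_Σ`, written as a sum over the subsets `T` of the
set of pairs of `S` (with `n(Σ) = |T|`). -/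
noncomputable def bS (β γ : Finset ℤ) : FF :=
  ∑ T ∈ (pairsS β γ).powerset, vv ^ T.card • uS (swapSymbol β γ T)

/-- `ι` is an involution of the finite set `Z`. -/
def IsInvolutionOn (Z : Finset ℤ) (ι : ℤ → ℤ) : Prop :=
  (∀ z ∈ Z, ι z ∈ Z) ∧ ∀ z ∈ Z, ι (ι z) = z

/-- `z < z'` are consecutive elements of `Z`. -/
def ConsecutiveIn (Z : Finset ℤ) (z z' : ℤ) : Prop :=
  z ∈ Z ∧ z' ∈ Z ∧ z < z' ∧ ∀ x ∈ Z, ¬(z < x ∧ x < z')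

/-- `r`-admissible involutions of a finite set `Z` of integers: `ι` is an involution of
`Z` with exactly `r` fixed points, and either `|Z| = r`, or there are two consecutive
elements `z < z'` of `Z` with `ι z = z'` whose removal again yields an `r`-admissible
involution. -/
inductive IsAdmissible (r : ℕ) : Finset ℤ → (ℤ → ℤ) → Prop
  | base (Z : Finset ℤ) (ι : ℤ → ℤ) (hinv : IsInvolutionOn Z ι)
      (hfix : (Z.filter fun z => ι z = z).card = r) (hcard : Z.card = r) :
      IsAdmissible r Z ι
  | step (Z : Finset ℤ) (ι : ℤ → ℤ) (z z' : ℤ) (hinv : IsInvolutionOn Z ι)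
      (hfix : (Z.filter fun w => ι w = w).card = r)
      (hcons : ConsecutiveIn Z z z') (hzz : ι z = z')
      (hrec : IsAdmissible r (Z \ {z, z'}) ι) :
      IsAdmissible r Z ι

/-- `c_j(S)`: number of occurrences of `j` among the entries of the symbol `(β,γ)`. -/
def contentS (β γ : Finset ℤ) (j : ℤ) : ℕ :=
  (if j ∈ β then 1 else 0) + (if j ∈ γ then 1 else 0)

end LM2003

namespace Finset

variable {α : Type*}

theorem union_sdiff_inter_eq_iff [DecidableEq α] {a b c d : Finset α}
    (h : a ∩ b = c ∩ d) : (a ∪ b) \ (a ∩ b) = (c ∪ d) \ (c ∩ d) ↔ a ∪ b = c ∪ d := by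
  refine ⟨fun hZ => ?_, fun hu => by rw [h, hu]⟩
  rw [← sdiff_union_of_subset (inter_subset_union (s := a) (t := b)), hZ, h,
    sdiff_union_of_subset inter_subset_union]

section LinearOrder

variable [LinearOrder α]

theorem card_filter_lt_sort_getElem (s : Finset α) {i : ℕ} (hi : i < (s.sort (· ≤ ·)).length) :
    (s.filter (· < (s.sort (· ≤ ·))[i])).card = i := by
  set L := s.sort (· ≤ ·)
  have hL : L.SortedLT := s.sortedLT_sort
  have : s.filter (· < L[i]) = (L.take i).toFinset := by
    ext x
    simp only [mem_filter, List.mem_toFinset, List.mem_take_iff_getElem]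
    constructor
    · rintro ⟨hx, hxi⟩
      obtain ⟨a, ha, rfl⟩ := List.mem_iff_getElem.1 ((mem_sort (· ≤ ·)).2 hx)
      exact ⟨a, lt_min (hL.getElem_lt_getElem_iff.1 hxi) ha, rfl⟩
    · rintro ⟨a, ha, rfl⟩
      exact ⟨(mem_sort (· ≤ ·)).1 (List.getElem_mem _),
        hL.getElem_lt_getElem_iff.2 (lt_of_lt_of_le ha (min_le_left _ _))⟩
  rw [this, List.toFinset_card_of_nodup ((s.sort_nodup _).sublist (List.take_sublist i L)),
    List.length_take, min_eq_left hi.le]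

theorem sort_getElem_card_filter_lt [Inhabited α] (s : Finset α) {a : α} (ha : a ∈ s) :
    (s.sort (· ≤ ·))[(s.filter (· < a)).card]! = a := by
  obtain ⟨i, hi, rfl⟩ := List.mem_iff_getElem.1 ((mem_sort (· ≤ ·)).2 ha)
  rw [card_filter_lt_sort_getElem s hi, getElem!_pos _ i hi]

theorem lt_card_filter_le_of_sort_getElem_le [Inhabited α] (s : Finset α) {i : ℕ}
    (hi : i < s.card) {a : α} (h : (s.sort (· ≤ ·))[i]! ≤ a) : i < (s.filter (· ≤ a)).card := by
  have hi' : i < (s.sort (· ≤ ·)).length := by rwa [length_sort]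
  rw [getElem!_pos _ i hi'] at h
  set b := (s.sort (· ≤ ·))[i]
  have hb : b ∈ s := (mem_sort (· ≤ ·)).1 (List.getElem_mem _)
  calc i < (s.filter (· < b)).card + 1 := by rw [card_filter_lt_sort_getElem s hi']; omega
    _ = (insert b (s.filter (· < b))).card := (card_insert_of_notMem (by simp)).symm
    _ ≤ (s.filter (· ≤ a)).card := card_le_card fun x hx => by
      rw [mem_insert, mem_filter] at hx
      rcases hx with rfl | ⟨hx, hxb⟩
      exacts [mem_filter.2 ⟨hb, h⟩, mem_filter.2 ⟨hx, hxb.le.trans h⟩]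

end LinearOrder

end Finset

namespace LM2003

open Finset

theorem IsStandard.card_filter_lt_lt_card_filter_le {β γ : Finset ℤ} (hstd : IsStandard β γ)
    (hcard : γ.card ≤ β.card) {j : ℤ} (hj : j ∈ γ) :
    (γ.filter (· < j)).card < (β.filter (· ≤ j)).card := by
  have hlt : (γ.filter (· < j)).card < γ.card :=
    card_lt_card (filter_ssubset.2 ⟨j, hj, lt_irrefl j⟩)
  have hle := hstd _ hlt
  rw [γ.sort_getElem_card_filter_lt hj] at hle
  exact β.lt_card_filter_le_of_sort_getElem_le (hlt.trans_le hcard) hle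

section Psi

variable {β γ : Finset ℤ}

theorem mem_gammaL_succ {l : ℕ} {x : ℤ} :
    x ∈ gammaL β γ (l + 1) ↔ (x ∈ γ ∧ x ∉ (psiAcc β γ l).1) ∧
      x - ((l : ℤ) + 1) ∈ β ∧ x - ((l : ℤ) + 1) ∉ (psiAcc β γ l).2 := by
  simp only [gammaL, mem_filter, mem_sdiff]

theorem gammaL_subset (l : ℕ) : gammaL β γ l ⊆ γ := by
  cases l with
  | zero => exact inter_subset_left
  | succ l => exact fun x hx => (mem_gammaL_succ.1 hx).1.1

theorem monotone_psiAcc_snd : Monotone fun l => (psiAcc β γ l).2 :=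
  monotone_nat_of_le_succ fun _ => subset_union_left

theorem mem_psiAcc_fst_iff {l : ℕ} {x : ℤ} :
    x ∈ (psiAcc β γ l).1 ↔ ∃ m ≤ l, x ∈ gammaL β γ m := by
  induction l with
  | zero => simp [psiAcc, gammaL]
  | succ l ih =>
    change x ∈ (psiAcc β γ l).1 ∪ gammaL β γ (l + 1) ↔ _
    rw [mem_union, ih]
    constructor
    · rintro (⟨m, hm, hx⟩ | hx)
      exacts [⟨m, by omega, hx⟩, ⟨l + 1, le_rfl, hx⟩]
    · rintro ⟨m, hm, hx⟩
      rcases Nat.lt_or_eq_of_le hm with hm | rfl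
      exacts [Or.inl ⟨m, by omega, hx⟩, Or.inr hx]

theorem exists_of_mem_psiAcc_snd {l : ℕ} {b : ℤ} (hb : b ∈ (psiAcc β γ l).2) :
    ∃ m ≤ l, ∃ x ∈ gammaL β γ m, x - m = b := by
  induction l with
  | zero => exact ⟨0, le_rfl, b, hb, by simp⟩
  | succ l ih =>
    change b ∈ (psiAcc β γ l).2 ∪ (gammaL β γ (l + 1)).image (· - ((l : ℤ) + 1)) at hb
    rcases mem_union.1 hb with hb | hb
    · obtain ⟨m, hm, hx⟩ := ih hb
      exact ⟨m, by omega, hx⟩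
    · obtain ⟨x, hx, rfl⟩ := mem_image.1 hb
      exact ⟨l + 1, le_rfl, x, hx, by push_cast; ring⟩

theorem eq_of_mem_gammaL {l m : ℕ} {x : ℤ} (hl : x ∈ gammaL β γ l) (hm : x ∈ gammaL β γ m) :
    l = m := by
  by_contra hne
  wlog hlt : l < m generalizing l m
  · exact this hm hl (Ne.symm hne) (by omega)
  obtain ⟨m, rfl⟩ := Nat.exists_eq_add_of_lt hlt
  exact (mem_gammaL_succ.1 hm).1.2 (mem_psiAcc_fst_iff.2 ⟨l, by omega, hl⟩)

theorem psiS_eq_of_mem_gammaL {l : ℕ} {x : ℤ} (hx : x ∈ gammaL β γ l) : psiS β γ x = x - l := by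
  have h : ∃ m, x ∈ gammaL β γ m := ⟨l, hx⟩
  rw [psiS, dif_pos h, eq_of_mem_gammaL (Nat.find_spec h) hx]

theorem psiS_mem_psiAcc_snd {l : ℕ} {x : ℤ} (hx : x ∈ gammaL β γ l) :
    psiS β γ x ∈ (psiAcc β γ l).2 := by
  rw [psiS_eq_of_mem_gammaL hx]
  cases l with
  | zero => simpa [gammaL, psiAcc] using hx
  | succ l => exact mem_union_right _ (mem_image.2 ⟨x, hx, by push_cast; ring⟩)

theorem psiS_injective_of_mem_gammaL {a b : ℕ} {x y : ℤ} (hx : x ∈ gammaL β γ a)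
    (hy : y ∈ gammaL β γ b) (h : psiS β γ x = psiS β γ y) : x = y := by
  wlog hab : a ≤ b generalizing a b x y
  · exact (this hy hx h.symm (by omega)).symm
  rcases Nat.lt_or_eq_of_le hab with hlt | rfl
  · obtain ⟨b, rfl⟩ := Nat.exists_eq_add_of_lt hlt
    refine absurd (monotone_psiAcc_snd (by omega : a ≤ a + b) (psiS_mem_psiAcc_snd hx)) ?_
    rw [h, psiS_eq_of_mem_gammaL hy]
    push_cast
    exact (mem_gammaL_succ.1 hy).2.2
  · rw [psiS_eq_of_mem_gammaL hx, psiS_eq_of_mem_gammaL hy] at h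
    omega

theorem psiS_mem_sdiff {l : ℕ} {x : ℤ} (hx : x ∈ gammaL β γ l) (hxβ : x ∉ β) :
    psiS β γ x ∈ β \ γ := by
  cases l with
  | zero => exact absurd (mem_inter.1 hx).2 hxβ
  | succ l =>
    obtain ⟨-, hβ, hnot⟩ := mem_gammaL_succ.1 hx
    rw [psiS_eq_of_mem_gammaL hx, Nat.cast_succ]
    exact mem_sdiff.2 ⟨hβ, fun hγ => hnot (monotone_psiAcc_snd l.zero_le (mem_inter.2 ⟨hγ, hβ⟩))⟩

end Psi

def graphOn (f : ℤ → ℤ) (A : Finset ℤ) : Finset (ℤ × ℤ) := A.image fun j => (j, f j)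

section Standard

variable {β γ : Finset ℤ}

theorem exists_mem_gammaL_of_isStandard (hstd : IsStandard β γ) (hcard : γ.card ≤ β.card)
    {j : ℤ} (hj : j ∈ γ) : ∃ l, j ∈ gammaL β γ l := by
  by_contra! hnot
  have hjβ : j ∉ β := fun h => hnot 0 (mem_inter.2 ⟨hj, h⟩)
  have hcover : β.filter (· ≤ j) ⊆ (γ.filter (· < j)).image (psiS β γ) := by
    intro b hb
    obtain ⟨hbβ, hbj⟩ := mem_filter.1 hb
    have hbj : b < j := lt_of_le_of_ne hbj (by rintro rfl; exact hjβ hbβ)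
    obtain ⟨l, hl⟩ : ∃ l : ℕ, j - b = l + 1 := ⟨(j - b - 1).toNat, by omega⟩
    have hbl : b ∈ (psiAcc β γ l).2 := by
      by_contra hbl
      refine hnot (l + 1) (mem_gammaL_succ.2 ⟨⟨hj, fun h => ?_⟩, ?_⟩)
      · obtain ⟨m, -, hm⟩ := mem_psiAcc_fst_iff.1 h
        exact hnot m hm
      · rw [show j - ((l : ℤ) + 1) = b by omega]
        exact ⟨hbβ, hbl⟩
    obtain ⟨m, hml, x, hx, rfl⟩ := exists_of_mem_psiAcc_snd hbl
    exact mem_image.2 ⟨x, mem_filter.2 ⟨gammaL_subset m hx, by omega⟩, psiS_eq_of_mem_gammaL hx⟩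
  exact (hstd.card_filter_lt_lt_card_filter_le hcard hj).not_ge
    ((card_le_card hcover).trans card_image_le)

variable (hψ : ∀ j ∈ γ, ∃ l, j ∈ gammaL β γ l)
include hψ

theorem mapsTo_psiS : Set.MapsTo (psiS β γ) ↑(γ \ β) ↑(β \ γ) := by
  intro x hx
  obtain ⟨hxγ, hxβ⟩ := mem_sdiff.1 hx
  obtain ⟨l, hl⟩ := hψ x hxγ
  exact psiS_mem_sdiff hl hxβ

theorem injOn_psiS : Set.InjOn (psiS β γ) γ := by
  intro x hx y hy h
  obtain ⟨a, ha⟩ := hψ x hx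
  obtain ⟨b, hb⟩ := hψ y hy
  exact psiS_injective_of_mem_gammaL ha hb h

theorem pairsS_eq : pairsS β γ = graphOn (psiS β γ) (γ \ β) := by
  rw [pairsS, graphOn]
  congr 1
  ext j
  simp only [mem_filter, mem_sdiff, and_congr_right_iff]
  intro hj
  constructor
  · intro hne hjβ
    exact hne (by simpa using psiS_eq_of_mem_gammaL (l := 0) (mem_inter.2 ⟨hj, hjβ⟩))
  · intro hjβ h
    exact hjβ (h ▸ (mem_sdiff.1 (mapsTo_psiS hψ (mem_sdiff.2 ⟨hj, hjβ⟩))).1)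

end Standard

section Swap

variable {β γ A : Finset ℤ} {f : ℤ → ℤ}

theorem swapSymbol_graphOn :
    swapSymbol β γ (graphOn f A) = ((β \ A.image f) ∪ A, (γ \ A) ∪ A.image f) := by
  simp [swapSymbol, graphOn, image_image, Function.comp_def]

variable (hf : Set.MapsTo f ↑(γ \ β) ↑(β \ γ))
include hf

theorem image_subset_sdiff (hA : A ⊆ γ \ β) : A.image f ⊆ β \ γ := by
  intro x hx
  obtain ⟨y, hy, rfl⟩ := mem_image.1 hx
  exact hf (hA hy)

theorem swapSymbol_graphOn_inter (hA : A ⊆ γ \ β) :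
    (swapSymbol β γ (graphOn f A)).1 ∩ (swapSymbol β γ (graphOn f A)).2 = β ∩ γ := by
  rw [swapSymbol_graphOn]
  ext x
  have h₁ : x ∈ A → x ∈ γ \ β := fun hx => hA hx
  have h₂ : x ∈ A.image f → x ∈ β \ γ := fun hx => image_subset_sdiff hf hA hx
  simp only [mem_inter, mem_union, mem_sdiff] at h₁ h₂ ⊢
  tauto

theorem swapSymbol_graphOn_union (hA : A ⊆ γ \ β) :
    (swapSymbol β γ (graphOn f A)).1 ∪ (swapSymbol β γ (graphOn f A)).2 = β ∪ γ := by
  rw [swapSymbol_graphOn]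
  ext x
  have h₁ : x ∈ A → x ∈ γ \ β := fun hx => hA hx
  have h₂ : x ∈ A.image f → x ∈ β \ γ := fun hx => image_subset_sdiff hf hA hx
  simp only [mem_union, mem_sdiff] at h₁ h₂ ⊢
  tauto

variable (hinj : Set.InjOn f ↑(γ \ β))
include hinj

theorem card_swapSymbol_graphOn_fst (hA : A ⊆ γ \ β) :
    (swapSymbol β γ (graphOn f A)).1.card = β.card := by
  have hβ : A.image f ⊆ β := (image_subset_sdiff hf hA).trans sdiff_subset
  have hdisj : Disjoint (β \ A.image f) A :=
    disjoint_left.2 fun x hx hxA => (mem_sdiff.1 (hA hxA)).2 (mem_sdiff.1 hx).1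
  have := card_le_card hβ
  have := card_image_of_injOn (hinj.mono (coe_subset.2 hA))
  rw [swapSymbol_graphOn, card_union_of_disjoint hdisj, card_sdiff_of_subset hβ]
  omega

theorem card_swapSymbol_graphOn_snd (hA : A ⊆ γ \ β) :
    (swapSymbol β γ (graphOn f A)).2.card = γ.card := by
  have hγ : A ⊆ γ := hA.trans sdiff_subset
  have hdisj : Disjoint (γ \ A) (A.image f) :=
    disjoint_left.2 fun x hx hxA =>
      (mem_sdiff.1 (image_subset_sdiff hf hA hxA)).2 (mem_sdiff.1 hx).1
  have := card_le_card hγ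
  have := card_image_of_injOn (hinj.mono (coe_subset.2 hA))
  rw [swapSymbol_graphOn, card_union_of_disjoint hdisj, card_sdiff_of_subset hγ]
  omega

theorem swapSymbol_graphOn_separates (hA : A ⊆ γ \ β) {j : ℤ} (hj : j ∈ γ \ β) :
    (j ∈ (swapSymbol β γ (graphOn f A)).1 ∧ f j ∈ (swapSymbol β γ (graphOn f A)).2) ∨
      (j ∈ (swapSymbol β γ (graphOn f A)).2 ∧ f j ∈ (swapSymbol β γ (graphOn f A)).1) := by
  rw [swapSymbol_graphOn]
  by_cases hjA : j ∈ A
  · exact Or.inl ⟨mem_union_right _ hjA, mem_union_right _ (mem_image_of_mem f hjA)⟩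
  · refine Or.inr ⟨mem_union_left _ (mem_sdiff.2 ⟨(mem_sdiff.1 hj).1, hjA⟩),
      mem_union_left _ (mem_sdiff.2 ⟨(mem_sdiff.1 (hf hj)).1, fun hfj => hjA ?_⟩)⟩
    obtain ⟨a, ha, hfa⟩ := mem_image.1 hfj
    exact hinj (hA ha) hj hfa ▸ ha

theorem eq_swapSymbol_graphOn {p : Finset ℤ × Finset ℤ} (hi : p.1 ∩ p.2 = β ∩ γ)
    (hu : p.1 ∪ p.2 = β ∪ γ) (hcard : p.2.card = γ.card)
    (hsep : ∀ j ∈ γ \ β, (j ∈ p.1 ∧ f j ∈ p.2) ∨ (j ∈ p.2 ∧ f j ∈ p.1)) :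
    p = swapSymbol β γ (graphOn f ((γ \ β).filter (· ∈ p.1))) := by
  set A := (γ \ β).filter (· ∈ p.1)
  have hA : A ⊆ γ \ β := filter_subset _ _
  have hsub : (swapSymbol β γ (graphOn f A)).2 ⊆ p.2 := by
    rw [swapSymbol_graphOn]
    intro x hx
    rcases mem_union.1 hx with hx | hx
    · obtain ⟨hxγ, hxA⟩ := mem_sdiff.1 hx
      by_cases hxβ : x ∈ β
      · exact (mem_inter.1 (hi ▸ mem_inter.2 ⟨hxβ, hxγ⟩)).2
      · have hxP : x ∉ p.1 := fun h => hxA (mem_filter.2 ⟨mem_sdiff.2 ⟨hxγ, hxβ⟩, h⟩)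
        exact (mem_union.1 (hu ▸ mem_union_right β hxγ)).resolve_left hxP
    · obtain ⟨a, ha, rfl⟩ := mem_image.1 hx
      obtain ⟨haD, haP⟩ := mem_filter.1 ha
      refine ((hsep a haD).resolve_right fun h => (mem_sdiff.1 haD).2 ?_).2
      exact (mem_inter.1 (hi ▸ mem_inter.2 ⟨haP, h.1⟩)).1
  have h₂ : p.2 = (swapSymbol β γ (graphOn f A)).2 :=
    (eq_of_subset_of_card_le hsub (by rw [hcard, card_swapSymbol_graphOn_snd hf hinj hA])).symm
  refine Prod.ext (eq_of_inf_eq_sup_eq (a := p.2) ?_ ?_) h₂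
  · rw [inf_eq_inter, hi, h₂, inf_eq_inter, swapSymbol_graphOn_inter hf hA]
  · rw [sup_eq_union, hu, h₂, sup_eq_union, swapSymbol_graphOn_union hf hA]

theorem mem_image_swapSymbol_iff {p : Finset ℤ × Finset ℤ} :
    p ∈ (graphOn f (γ \ β)).powerset.image (swapSymbol β γ) ↔
      p.1 ∩ p.2 = β ∩ γ ∧ p.1 ∪ p.2 = β ∪ γ ∧ p.1.card = β.card ∧ p.2.card = γ.card ∧
        ∀ j ∈ γ \ β, (j ∈ p.1 ∧ f j ∈ p.2) ∨ (j ∈ p.2 ∧ f j ∈ p.1) := by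
  rw [graphOn, powerset_image, image_image]
  simp only [mem_image, mem_powerset, Function.comp_def]
  constructor
  · rintro ⟨A, hA, rfl⟩
    exact ⟨swapSymbol_graphOn_inter hf hA, swapSymbol_graphOn_union hf hA,
      card_swapSymbol_graphOn_fst hf hinj hA, card_swapSymbol_graphOn_snd hf hinj hA,
      fun j hj => swapSymbol_graphOn_separates hf hinj hA hj⟩
  · rintro ⟨hi, hu, -, hcard, hsep⟩
    exact ⟨_, filter_subset _ _, (eq_swapSymbol_graphOn hf hinj hi hu hcard hsep).symm⟩

end Swap

theorem statement9_general (n k r : ℕ)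
    (β γ : Finset ℤ) (hS : IsSymbol n k r β γ) (hstd : IsStandard β γ) :
    (CSet β γ : Set (Finset ℤ × Finset ℤ)) =
      { p : Finset ℤ × Finset ℤ |
        IsSymbol n k r p.1 p.2 ∧ p.1 ∩ p.2 = β ∩ γ ∧
        (p.1 ∪ p.2) \ (p.1 ∩ p.2) = (β ∪ γ) \ (β ∩ γ) ∧
        ∀ q ∈ pairsS β γ, (q.1 ∈ p.1 ∧ q.2 ∈ p.2) ∨ (q.1 ∈ p.2 ∧ q.2 ∈ p.1) } := by
  obtain ⟨hβI, hγI, hβc, hγc⟩ := hS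
  have hψ : ∀ j ∈ γ, ∃ l, j ∈ gammaL β γ l :=
    fun j hj => exists_mem_gammaL_of_isStandard hstd (by omega) hj
  ext p
  rw [mem_coe, CSet, pairsS_eq hψ,
    mem_image_swapSymbol_iff (mapsTo_psiS hψ) ((injOn_psiS hψ).mono (coe_subset.2 sdiff_subset))]
  simp only [Set.mem_ofPred_eq, IsSymbol, graphOn, forall_mem_image]
  constructor
  · rintro ⟨hi, hu, h₁, h₂, hsep⟩
    have hsub : p.1 ∪ p.2 ⊆ Icc 1 ((n : ℤ) + 1) := hu ▸ union_subset hβI hγI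
    exact ⟨⟨subset_union_left.trans hsub, subset_union_right.trans hsub, by omega, by omega⟩,
      hi, (union_sdiff_inter_eq_iff hi).2 hu, hsep⟩
  · rintro ⟨⟨-, -, h₁, h₂⟩, hi, hZ, hsep⟩
    exact ⟨hi, (union_sdiff_inter_eq_iff hi).1 hZ, by omega, by omega, hsep⟩

/-- for a standard symbol `S` with associated involution `ι` of `Z(S)`
(nontrivial orbits = pairs of `S`), `C(S)` is exactly the set of symbols
`Σ ∈ Sy(n,k,r)` with the same intersection of rows, the same `Z`, and such that each
nontrivial orbit of `ι` has one member in each row of `Σ`. -/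
theorem statement9 (n k r : ℕ) (hn : 2 ≤ n) (hk : 1 ≤ k) (hkr : k + r ≤ n)
    (β γ : Finset ℤ) (hS : IsSymbol n k r β γ) (hstd : IsStandard β γ) :
    (CSet β γ : Set (Finset ℤ × Finset ℤ)) =
      { p : Finset ℤ × Finset ℤ |
        IsSymbol n k r p.1 p.2 ∧ p.1 ∩ p.2 = β ∩ γ ∧
        (p.1 ∪ p.2) \ (p.1 ∩ p.2) = (β ∪ γ) \ (β ∩ γ) ∧
        ∀ q ∈ pairsS β γ, (q.1 ∈ p.1 ∧ q.2 ∈ p.2) ∨ (q.1 ∈ p.2 ∧ q.2 ∈ p.1) } :=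
  statement9_general n k r β γ hS hstd

end LM2003
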